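/- For any point a ∈ S², the punctured sphere S² \ {a} has the Phragmen–Brouwer Property. -/

import Mathlib

def PhragmenBrouwer (X : Type*) [TopologicalSpace X] : Prop :=
  ConnectedSpace X ∧
    ∀ D E : Set X, IsClosed D → IsClosed E → Disjoint D E →
      ∀ a b : X, a ∉ D ∪ E → b ∉ D ∪ E →
        b ∈ connectedComponentIn Dᶜ a → b ∈ connectedComponentIn Eᶜ a →
          b ∈ connectedComponentIn (D ∪ E)ᶜ a

/-!
Suppose `a` and `b` lie in different components of `(D ∪ E)ᶜ`; let `B` be the component of `b`
and `g` a Urysohn function, `0` on `D` and `1` on `E`. The circle-valued map equal to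
`exp (-iπg)` on `B` and to `exp (iπg)` off `B` is continuous, since `∂B ⊆ D ∪ E`, where `g` takes
integer values. If it has a real lift `h`, then `h + πg` on `B` and `h - πg` off `B` take values
in `2πℤ`, and jump by `2πg` across `∂B`. Inside the component of `Dᶜ` containing `a` and `b` the
jump is `2π`, inside that of `Eᶜ` it is `0`, so the two components give different values of
`h b - h a`. Lifts exist on simply connected, locally path-connected spaces, and the punctured
sphere is one: stereographic projection makes it a plane.
-/

open Set Real Topology

section

variable {X : Type*} [TopologicalSpace X]

theorem frontier_connectedComponentIn_subset [LocallyConnectedSpace X] {F : Set X}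
    (hF : IsOpen F) (x : X) : frontier (connectedComponentIn F x) ⊆ Fᶜ := by
  intro y hy hyF
  obtain ⟨z, hzy, hzx⟩ := mem_closure_iff_nhds.1 hy.1 _
    (connectedComponentIn_mem_nhds (hF.mem_nhds hyF))
  have hyx : y ∈ connectedComponentIn F x := by
    rw [connectedComponentIn_eq hzx, ← connectedComponentIn_eq hzy]
    exact mem_connectedComponentIn hyF
  exact hy.2 (hF.connectedComponentIn.interior_eq.symm ▸ hyx)

noncomputable def signedCircleExp (B : Set X) [DecidablePred (· ∈ B)] (g : X → ℝ) :
    X → Circle :=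
  B.piecewise (fun x ↦ Circle.exp (-(π * g x))) (fun x ↦ Circle.exp (π * g x))

section signedCircleExp

variable {B : Set X} [DecidablePred (· ∈ B)] {g : X → ℝ}

theorem continuous_signedCircleExp (hg : Continuous g)
    (hB : ∀ x ∈ frontier B, ∃ n : ℤ, g x = n) : Continuous (signedCircleExp B g) := by
  refine Continuous.piecewise (fun x hx ↦ ?_) (by fun_prop) (by fun_prop)
  obtain ⟨n, hn⟩ := hB x hx
  exact Circle.exp_eq_exp.2 ⟨-n, by rw [hn]; push_cast; ring⟩

theorem IsPreconnected.sub_eq_of_lift_signedCircleExp {h : X → ℝ} (hg : Continuous g)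
    (hh : Continuous h) (hlift : ∀ x, Circle.exp (h x) = signedCircleExp B g x)
    {S : Set X} (hS : IsPreconnected S) {k : ℤ} (hk : ∀ x ∈ S ∩ frontier B, g x = k)
    {a b : X} (ha : a ∈ S \ B) (hb : b ∈ S ∩ B) :
    h a - π * g a = h b + π * g b - 2 * π * k := by
  set ψ := B.piecewise (fun x ↦ h x + π * g x - 2 * π * k) (fun x ↦ h x - π * g x)
  have hψ : ContinuousOn ψ S :=
    ContinuousOn.piecewise (fun x hx ↦ by rw [hk x hx]; ring) (by fun_prop) (by fun_prop)
  have hψ_exp : ∀ x, Circle.exp (ψ x) = 1 := by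
    intro x
    have hx' := hlift x
    by_cases hx : x ∈ B
    · rw [signedCircleExp, piecewise_eq_of_mem _ _ _ hx] at hx'
      obtain ⟨m, hm⟩ := Circle.exp_eq_exp.1 hx'
      exact Circle.exp_eq_one.2
        ⟨m - k, by simp only [ψ, piecewise_eq_of_mem _ _ _ hx, hm]; push_cast; ring⟩
    · rw [signedCircleExp, piecewise_eq_of_notMem _ _ _ hx] at hx'
      obtain ⟨m, hm⟩ := Circle.exp_eq_exp.1 hx'
      exact Circle.exp_eq_one.2 ⟨m, by simp only [ψ, piecewise_eq_of_notMem _ _ _ hx, hm]; ring⟩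
  have hψ_const := Circle.isCoveringMap_exp.constOn_of_comp hS hψ
    (fun x _ y _ ↦ by rw [hψ_exp, hψ_exp]) ha.1 hb.1
  simpa [ψ, ha.2, hb.2] using hψ_const

end signedCircleExp

theorem phragmenBrouwer_of_forall_exists_lift [ConnectedSpace X] [NormalSpace X]
    [LocallyConnectedSpace X]
    (hlift : ∀ f : X → Circle, Continuous f →
      ∃ h : X → ℝ, Continuous h ∧ ∀ x, Circle.exp (h x) = f x) :
    PhragmenBrouwer X := by
  classical
  refine ⟨‹_›, fun D E hD hE hDE a b haDE hbDE hbD hbE ↦ ?_⟩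
  by_contra hab
  set B := connectedComponentIn (D ∪ E)ᶜ b
  have haB : a ∉ B := fun ha ↦ hab (connectedComponentIn_eq ha ▸ mem_connectedComponentIn hbDE)
  have hbB : b ∈ B := mem_connectedComponentIn hbDE
  have hB : frontier B ⊆ D ∪ E := by
    simpa only [compl_compl] using
      frontier_connectedComponentIn_subset (hD.union hE).isOpen_compl b
  obtain ⟨g, hg0, hg1, -⟩ := exists_continuous_zero_one_of_isClosed hD hE hDE
  obtain ⟨h, hh, hhg⟩ := hlift _ <| continuous_signedCircleExp (B := B) g.continuous
    fun x hx ↦ (hB hx).elim (fun hxD ↦ ⟨0, by simpa using hg0 hxD⟩)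
      (fun hxE ↦ ⟨1, by simpa using hg1 hxE⟩)
  have hD_side := isPreconnected_connectedComponentIn.sub_eq_of_lift_signedCircleExp
    g.continuous hh hhg (k := 1)
    (fun x hx ↦ by simpa using hg1 ((hB hx.2).resolve_left (connectedComponentIn_subset _ _ hx.1)))
    ⟨mem_connectedComponentIn (show a ∈ Dᶜ from fun h ↦ haDE (.inl h)), haB⟩ ⟨hbD, hbB⟩
  have hE_side := isPreconnected_connectedComponentIn.sub_eq_of_lift_signedCircleExp
    g.continuous hh hhg (k := 0)
    (fun x hx ↦ by simpa using hg0 ((hB hx.2).resolve_right (connectedComponentIn_subset _ _ hx.1)))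
    ⟨mem_connectedComponentIn (show a ∈ Eᶜ from fun h ↦ haDE (.inr h)), haB⟩ ⟨hbE, hbB⟩
  push_cast at hD_side hE_side
  linarith [pi_pos]

theorem exists_continuous_circleExp_lift [SimplyConnectedSpace X] [LocallyPathConnectedSpace X]
    {f : X → Circle} (hf : Continuous f) :
    ∃ h : X → ℝ, Continuous h ∧ ∀ x, Circle.exp (h x) = f x := by
  obtain ⟨x₀⟩ : Nonempty X := inferInstance
  obtain ⟨F, -, hF⟩ := (Circle.isCoveringMap_exp.existsUnique_continuousMap_lifts ⟨f, hf⟩ x₀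
    (Complex.arg (f x₀)) (Circle.exp_arg _)).exists
  exact ⟨F, F.continuous, congrFun hF⟩

theorem phragmenBrouwer_of_simplyConnectedSpace [NormalSpace X] [LocallyPathConnectedSpace X]
    [SimplyConnectedSpace X] : PhragmenBrouwer X :=
  phragmenBrouwer_of_forall_exists_lift fun _ ↦ exists_continuous_circleExp_lift

end

noncomputable def puncturedSphereHomeomorph {E : Type*} [NormedAddCommGroup E]
    [InnerProductSpace ℝ E] {v : E} (hv : ‖v‖ = 1) :
    ↥(Metric.sphere (0 : E) 1 \ {v}) ≃ₜ (ℝ ∙ v)ᗮ :=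
  (Homeomorph.setCongr (by ext; simp [and_comm])).trans <|
    (Topology.IsEmbedding.subtypeVal.homeomorphImage
      ({⟨v, by simp [hv]⟩}ᶜ : Set (Metric.sphere (0 : E) 1))).symm.trans <|
    (Homeomorph.setCongr (stereographic_source hv).symm).trans <|
    (stereographic hv).toHomeomorphSourceTarget.trans <|
    (Homeomorph.setCongr (stereographic_target hv)).trans (Homeomorph.Set.univ _)

theorem punctured_sphere_pbp (a : EuclideanSpace ℝ (Fin 3))
    (ha : a ∈ Metric.sphere (0 : EuclideanSpace ℝ (Fin 3)) 1) :
    PhragmenBrouwer ((Metric.sphere (0 : EuclideanSpace ℝ (Fin 3)) 1 \ {a} :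
      Set (EuclideanSpace ℝ (Fin 3)))) := by
  let e := puncturedSphereHomeomorph (mem_sphere_zero_iff_norm.1 ha)
  have := e.isOpenEmbedding.locallyPathConnectedSpace
  have := e.contractibleSpace_iff.2 inferInstance
  exact phragmenBrouwer_of_simplyConnectedSpace
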